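/- arXiv:1306.5809 — 5 statements merged into one kernel-verified Lean document; each statement's English description precedes it below -/
import Mathlib

section
/- Let g_1, …, g_u ∈ F_r^* have multiplicative orders n_1, …, n_u with gcd(n_i, n_j) = 1 for all i ≠ j, and set n = n_1 n_2 ⋯ n_u. For a_1, …, a_u ∈ F_r let c(a_1, …, a_u) ∈ F_q^n be the word with coordinates Tr_{r/q}(Σ_{i=1}^u a_i g_i^t) for t = 0, …, n − 1. Then the Hamming weight of c(a_1, …, a_u) equals (q−1)n/q − (1/q) Σ_{y ∈ F_q^*} Π_{i=1}^u ( Σ_{x ∈ ⟨g_i⟩} ψ(y a_i x) ), where ⟨g_i⟩ is the cyclic subgroup of F_r^* generated by g_i (equality holding after casting the weight into ℂ). -/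
/-!
Counting zeros with additive characters. Let `ψ_K` be the canonical character of `F_q`. By
transitivity of the trace, `ψ(y·z) = ψ_K(y · Tr_{r/q} z)` for `y ∈ F_q`; as `ψ_K` is primitive,
`Σ_{y ∈ F_q} ψ(y z)` is `q` or `0` according as `Tr_{r/q} z` vanishes or not. Summing over the
coordinates, the term `y = 0` contributes `n`, which gives the weight in terms of
`Σ_{y ∈ F_q^*} Σ_{t < n} ψ(y c_t)`. For each `y`, `ψ` turns the sum over `i` in `c_t` into a
product, and as `t ↦ g_i ^ t` has period `n_i`, the Chinese remainder theorem factors the sum over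
`t < n₁ ⋯ n_u` into the product of sums over `t < n_i`.
-/

open Finset Function

/-- The canonical additive character `ψ(x) = e^{2πi·Tr_{F/F_p}(x)/p}` of a finite field `F`
of characteristic `p`. -/
noncomputable def psi (p : ℕ) (F : Type*) [Field F] [Fintype F] [Algebra (ZMod p) F]
    (x : F) : ℂ :=
  Complex.exp (2 * (Real.pi : ℂ) * Complex.I * ((Algebra.trace (ZMod p) F x).val : ℂ) / (p : ℂ))

theorem AddChar.map_sum_eq_prod {A M ι : Type*} [AddCommMonoid A] [CommMonoid M]
    (ψ : AddChar A M) (s : Finset ι) (f : ι → A) : ψ (∑ i ∈ s, f i) = ∏ i ∈ s, ψ (f i) :=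
  map_prod ψ.toMonoidHom (fun i => Multiplicative.ofAdd (f i)) s

theorem sum_eq_add_sum_units {G₀ M : Type*} [GroupWithZero G₀] [Fintype G₀] [DecidableEq G₀]
    [AddCommMonoid M] (f : G₀ → M) : ∑ x, f x = f 0 + ∑ u : G₀ˣ, f u := by
  rw [← add_sum_erase _ _ (mem_univ 0), sum_subtype (univ.erase 0) (p := (· ≠ 0)) (by simp)]
  exact congrArg _ (unitsEquivNeZero.sum_comp fun a : {a : G₀ // a ≠ 0} => f a).symm

theorem hammingNorm_add_card_filter_eq_zero {ι β : Type*} [Fintype ι] [Zero β] [DecidableEq β]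
    (x : ι → β) : hammingNorm x + #{i | x i = 0} = Fintype.card ι := by
  rw [hammingNorm, add_comm, card_filter_add_card_filter_not, card_univ]

theorem sum_zmod_val_eq_sum_range {M : Type*} [AddCommMonoid M] (N : ℕ) [NeZero N]
    (f : ℕ → M) : ∑ z : ZMod N, f z.val = ∑ t ∈ range N, f t := by
  obtain ⟨k, rfl⟩ := Nat.exists_eq_succ_of_ne_zero (NeZero.ne N)
  exact Fin.sum_univ_eq_sum_range f (k + 1)

theorem sum_range_prod_prod_eq_prod_sum_range {ι M : Type*} [Fintype ι] [DecidableEq ι]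
    [CommSemiring M] (n : ι → ℕ) (hcop : Pairwise (Nat.Coprime on n)) (f : ι → ℕ → M)
    (hf : ∀ i, Periodic (f i) (n i)) :
    ∑ t ∈ range (∏ i, n i), ∏ i, f i t = ∏ i, ∑ t ∈ range (n i), f i t := by
  by_cases h0 : ∃ i, n i = 0
  · obtain ⟨i, hi⟩ := h0
    rw [prod_eq_zero (mem_univ i) hi, prod_eq_zero (mem_univ i) (by rw [hi, sum_range_zero]),
      sum_range_zero]
  push Not at h0
  have : ∀ i, NeZero (n i) := fun i => ⟨h0 i⟩
  have : NeZero (∏ i, n i) := ⟨prod_ne_zero_iff.mpr fun i _ => h0 i⟩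
  have hcrt : ∀ (z : ZMod (∏ i, n i)) i, f i z.val = f i (ZMod.prodEquivPi n hcop z i).val := by
    intro z i
    rw [ZMod.prodEquivPi_apply, ZMod.castHom_apply, ZMod.cast_eq_val, ZMod.val_natCast,
      (hf i).map_mod_nat]
  simp_rw [← sum_zmod_val_eq_sum_range, hcrt, Fintype.prod_sum]
  exact (ZMod.prodEquivPi n hcop).toEquiv.sum_comp fun w => ∏ i, f i (w i).val

theorem periodic_pow_orderOf {G : Type*} [Monoid G] (g : G) : Periodic (g ^ ·) (orderOf g) :=
  fun t => by simp only [pow_add, pow_orderOf_eq_one, mul_one]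

theorem AddChar.sum_range_sum_mul_pow {ι R M : Type*} [Fintype ι] [DecidableEq ι]
    [CommSemiring R] [CommSemiring M] (ψ : AddChar R M) (x b : ι → R)
    (hcop : Pairwise (Nat.Coprime on fun i => orderOf (x i))) :
    ∑ t ∈ range (∏ i, orderOf (x i)), ψ (∑ i, b i * x i ^ t)
      = ∏ i, ∑ t ∈ range (orderOf (x i)), ψ (b i * x i ^ t) := by
  simp_rw [ψ.map_sum_eq_prod]
  exact sum_range_prod_prod_eq_prod_sum_range _ hcop (fun i t => ψ (b i * x i ^ t))
    fun i => (periodic_pow_orderOf (x i)).comp fun z => ψ (b i * z)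

section PsiAddChar

noncomputable def psiAddChar (p : ℕ) [NeZero p] (F : Type*) [Field F] [Algebra (ZMod p) F] :
    AddChar F ℂ :=
  ZMod.stdAddChar.compAddMonoidHom (Algebra.trace (ZMod p) F).toAddMonoidHom

theorem psiAddChar_apply {p : ℕ} [NeZero p] {F : Type*} [Field F] [Fintype F]
    [Algebra (ZMod p) F] (x : F) : psiAddChar p F x = psi p F x := by
  rw [psiAddChar, AddChar.compAddMonoidHom_apply, ZMod.stdAddChar_apply, ZMod.toCircle_apply]
  rfl

variable {p : ℕ} [Fact p.Prime]

theorem psiAddChar_isPrimitive (K : Type*) [Field K] [Finite K] [Algebra (ZMod p) K] :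
    (psiAddChar p K).IsPrimitive := by
  refine AddChar.IsPrimitive.of_ne_one fun h => Algebra.trace_ne_zero (ZMod p) K ?_
  ext x
  apply ZMod.injective_stdAddChar
  rw [LinearMap.zero_apply, AddChar.map_zero_eq_one]
  exact DFunLike.congr_fun h x

theorem psiAddChar_algebraMap_mul {K F : Type*} [Field K] [Finite K] [Field F] [Finite F]
    [Algebra (ZMod p) K] [Algebra (ZMod p) F] [Algebra K F] [IsScalarTower (ZMod p) K F]
    (y : K) (z : F) :
    psiAddChar p F (algebraMap K F y * z) = psiAddChar p K (y * Algebra.trace K F z) := by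
  simp only [psiAddChar, AddChar.compAddMonoidHom_apply, LinearMap.toAddMonoidHom_coe]
  rw [← Algebra.trace_trace (R := ZMod p) (S := K), ← Algebra.smul_def, map_smul, smul_eq_mul]

theorem sum_psiAddChar_algebraMap_mul (K : Type*) {F : Type*} [Field K] [Fintype K]
    [DecidableEq K] [Field F] [Finite F] [Algebra (ZMod p) K] [Algebra (ZMod p) F] [Algebra K F]
    [IsScalarTower (ZMod p) K F] (z : F) :
    ∑ y : K, psiAddChar p F (algebraMap K F y * z)
      = if Algebra.trace K F z = 0 then (Fintype.card K : ℂ) else 0 := by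
  simp_rw [psiAddChar_algebraMap_mul]
  rw [AddChar.sum_mulShift _ (psiAddChar_isPrimitive K)]
  norm_cast

theorem hammingNorm_trace_eq {K F ι : Type*} [Field K] [Fintype K] [DecidableEq K]
    [Field F] [Finite F] [Algebra (ZMod p) K] [Algebra (ZMod p) F] [Algebra K F]
    [IsScalarTower (ZMod p) K F] [Fintype ι] (c : ι → F) :
    (hammingNorm (fun t => Algebra.trace K F (c t)) : ℂ)
      = ((Fintype.card K : ℂ) - 1) * Fintype.card ι / Fintype.card K
        - 1 / (Fintype.card K : ℂ) * ∑ y : Kˣ, ∑ t, psiAddChar p F (algebraMap K F y * c t) := by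
  have hzeros : (Fintype.card K : ℂ) * #{t | Algebra.trace K F (c t) = 0}
      = Fintype.card ι + ∑ y : Kˣ, ∑ t, psiAddChar p F (algebraMap K F y * c t) :=
    calc (Fintype.card K : ℂ) * #{t | Algebra.trace K F (c t) = 0}
        = ∑ t, ∑ y : K, psiAddChar p F (algebraMap K F y * c t) := by
          simp_rw [sum_psiAddChar_algebraMap_mul K, sum_ite, sum_const_zero, sum_const,
            nsmul_eq_mul, add_zero, mul_comm]
      _ = ∑ y : K, ∑ t, psiAddChar p F (algebraMap K F y * c t) := sum_comm
      _ = Fintype.card ι + ∑ y : Kˣ, ∑ t, psiAddChar p F (algebraMap K F y * c t) := by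
          simp [sum_eq_add_sum_units]
  have hcard := congrArg (Nat.cast : ℕ → ℂ)
    (hammingNorm_add_card_filter_eq_zero fun t => Algebra.trace K F (c t))
  push_cast at hcard
  have hq : (Fintype.card K : ℂ) ≠ 0 := Nat.cast_ne_zero.mpr Fintype.card_ne_zero
  field_simp
  linear_combination (Fintype.card K : ℂ) * hcard - hzeros

end PsiAddChar

theorem stmt1_general (p u : ℕ) [Fact p.Prime]
    (K F : Type*) [Field K] [Fintype K] [DecidableEq K] [Field F] [Fintype F]
    [Algebra (ZMod p) F] [Algebra K F]
    (g : Fin u → Fˣ) (n : Fin u → ℕ) (hord : ∀ i, orderOf (g i) = n i)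
    (hcop : ∀ i j, i ≠ j → Nat.Coprime (n i) (n j))
    (a : Fin u → F) :
    (hammingNorm (fun t : Fin (∏ i, n i) =>
        Algebra.trace K F (∑ i, a i * (g i : F) ^ (t : ℕ))) : ℂ)
      = ((Fintype.card K : ℂ) - 1) * (∏ i, (n i : ℂ)) / (Fintype.card K : ℂ)
        - (1 / (Fintype.card K : ℂ)) * ∑ y : Kˣ,
            ∏ i, ∑ t ∈ Finset.range (n i),
              psi p F (algebraMap K F (y : K) * (a i * (g i : F) ^ t)) := by
  have : CharP F p := charP_of_injective_algebraMap (algebraMap (ZMod p) F).injective p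
  have : CharP K p := (Algebra.charP_iff K F p).mpr this
  let := ZMod.algebra K p
  have : IsScalarTower (ZMod p) K F := .of_algebraMap_eq' (RingHom.ext_zmod _ _)
  obtain rfl : n = fun i => orderOf (g i : F) := funext fun i => by rw [orderOf_units, hord]
  rw [hammingNorm_trace_eq (p := p), Fintype.card_fin, Nat.cast_prod]
  congr 2
  refine sum_congr rfl fun y _ => ?_
  simp_rw [← psiAddChar_apply, mul_sum, ← mul_assoc]
  rw [Fin.sum_univ_eq_sum_range
    (fun t => psiAddChar p F (∑ i, algebraMap K F y * a i * (g i : F) ^ t))]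
  exact (psiAddChar p F).sum_range_sum_mul_pow _ _ fun i j => hcop i j

/-- the Hamming weight of the codeword `c(a₁, …, a_u)` equals
`(q-1)n/q - (1/q) Σ_{y ∈ F_q^*} Π_i (Σ_{x ∈ ⟨g_i⟩} ψ(y a_i x))`, where the cyclic group
`⟨g_i⟩` of order `n i` is enumerated as `{g_i ^ t : 0 ≤ t < n i}`. -/
theorem stmt1 (p s m u : ℕ) [Fact p.Prime] (hs : 0 < s) (hm : 0 < m)
    (K F : Type*) [Field K] [Fintype K] [DecidableEq K] [Field F] [Fintype F]
    [Algebra (ZMod p) F] [Algebra K F]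
    (hq : Fintype.card K = p ^ s) (hr : Fintype.card F = Fintype.card K ^ m)
    (g : Fin u → Fˣ) (n : Fin u → ℕ) (hord : ∀ i, orderOf (g i) = n i)
    (hcop : ∀ i j, i ≠ j → Nat.Coprime (n i) (n j))
    (a : Fin u → F) :
    (hammingNorm (fun t : Fin (∏ i, n i) =>
        Algebra.trace K F (∑ i, a i * (g i : F) ^ (t : ℕ))) : ℂ)
      = ((Fintype.card K : ℂ) - 1) * (∏ i, (n i : ℂ)) / (Fintype.card K : ℂ)
        - (1 / (Fintype.card K : ℂ)) * ∑ y : Kˣ,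
            ∏ i, ∑ t ∈ Finset.range (n i),
              psi p F (algebraMap K F (y : K) * (a i * (g i : F) ^ t)) :=
  stmt1_general p u K F g n hord hcop a
end

section
/- Suppose a ∈ C_j^{(d_1, r)} for some 0 ≤ j ≤ d_1 − 1 and b = 0. Then the Hamming weight of c(a, b) equals (q−1)n_1 n_2/q − ((q−1) d_1 n_2/(q N_1)) · η_j^{(d_1, r)} (equality after casting the weight into ℂ). -/
/-- The cyclotomic class `C_i^{(N,r)} = α^i ⟨α^N⟩` in a finite field. -/
def cClass (F : Type*) [Field F] (α : Fˣ) (N i : ℕ) : Set F :=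
  {x | ∃ t : ℕ, x = ((α ^ (i + N * t) : Fˣ) : F)}

/-- The Gauss period `η_i^{(N,r)} = Σ_{x ∈ C_i^{(N,r)}} ψ(x)`. -/
noncomputable def gaussPeriod (p : ℕ) (F : Type*) [Field F] [Fintype F] [Algebra (ZMod p) F]
    (α : Fˣ) (N i : ℕ) : ℂ :=
  ∑ t ∈ Finset.range ((Fintype.card F - 1) / N), psi p F ((α ^ (i + N * t) : Fˣ) : F)

open Finset

section AdditiveCharacter

variable (p : ℕ) [Fact p.Prime] (F : Type*) [Field F] [Fintype F] [Algebra (ZMod p) F]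

noncomputable def psiChar : AddChar F ℂ :=
  ZMod.stdAddChar.compAddMonoidHom (Algebra.trace (ZMod p) F).toAddMonoidHom

theorem psiChar_apply (x : F) : psiChar p F x = psi p F x := by
  simp [psiChar, psi, ZMod.stdAddChar_apply, ZMod.toCircle_apply]

theorem psiChar_ne_one : psiChar p F ≠ 1 := by
  obtain ⟨x, hx⟩ := Algebra.trace_surjective (ZMod p) F 1
  refine AddChar.ne_one_iff.mpr ⟨x, fun h => one_ne_zero (α := ZMod p) ?_⟩
  rw [← AddChar.map_zero_eq_one (ZMod.stdAddChar (N := p))] at h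
  exact hx ▸ ZMod.injective_stdAddChar h

theorem psi_eq_psi_trace (K : Type*) [Field K] [Fintype K] [Algebra (ZMod p) K] [Algebra K F]
    [IsScalarTower (ZMod p) K F] (x : F) : psi p F x = psi p K (Algebra.trace K F x) := by
  rw [psi, psi, Algebra.trace_trace]

theorem sum_psi_algebraMap_mul (K : Type*) [Field K] [Fintype K] [DecidableEq K]
    [Algebra K F] (x : F) :
    ∑ y : K, psi p F (algebraMap K F y * x) =
      if Algebra.trace K F x = 0 then (Fintype.card K : ℂ) else 0 := by
  have : CharP F p := charP_of_injective_algebraMap' (ZMod p) p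
  have : CharP K p := (algebraMap K F).charP (algebraMap K F).injective p
  let : Algebra (ZMod p) K := ZMod.algebra K p
  have : IsScalarTower (ZMod p) K F := .of_algebraMap_eq' (RingHom.ext_zmod _ _)
  simp_rw [psi_eq_psi_trace p F K, ← Algebra.smul_def, map_smul, smul_eq_mul, ← psiChar_apply]
  rw [AddChar.sum_mulShift _ (AddChar.IsPrimitive.of_ne_one (psiChar_ne_one p K))]
  split_ifs <;> simp

end AdditiveCharacter

theorem Fintype.sum_units_eq_sum_sub_zero {K M : Type*} [GroupWithZero K] [Fintype K]
    [DecidableEq K] [AddCommGroup M] (f : K → M) : ∑ y : Kˣ, f y = ∑ y : K, f y - f 0 := by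
  rw [← sum_erase_eq_sub (mem_univ 0),
    sum_subtype _ (p := (· ≠ 0)) (fun y => by simp) f]
  exact Fintype.sum_equiv unitsEquivNeZero _ _ fun _ => rfl

section BaseFieldUnits

variable (K F : Type*) [Field K] [Field F] [Algebra K F]

def baseFieldUnits : Subgroup Fˣ := (Units.map (algebraMap K F : K →* F)).range

noncomputable def unitsEquivBaseFieldUnits : Kˣ ≃* baseFieldUnits K F :=
  MonoidHom.ofInjective (Units.map_injective (algebraMap K F).injective)

theorem natCard_baseFieldUnits : Nat.card (baseFieldUnits K F) = Nat.card K - 1 := by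
  rw [← Nat.card_congr (unitsEquivBaseFieldUnits K F).toEquiv, Nat.card_units]

end BaseFieldUnits

open scoped Classical in
theorem card_mul_indicator_trace_ne_zero (p : ℕ) [Fact p.Prime] (K F : Type*) [Field K]
    [Fintype K] [DecidableEq K] [Field F] [Fintype F] [Algebra (ZMod p) F] [Algebra K F] (x : F) :
    (Fintype.card K : ℂ) * (if Algebra.trace K F x = 0 then 0 else 1) =
      (Fintype.card K - 1) - ∑ z : baseFieldUnits K F, psi p F ((z : Fˣ) * x) := by
  rw [← Fintype.sum_equiv (unitsEquivBaseFieldUnits K F).toEquiv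
      (fun y => psi p F (algebraMap K F y * x)) _ fun _ => rfl,
    Fintype.sum_units_eq_sum_sub_zero (fun y => psi p F (algebraMap K F y * x)),
    sum_psi_algebraMap_mul]
  split_ifs <;> simp [← psiChar_apply]

namespace Subgroup

section Cyclic

variable {G : Type*} [Group G]

theorem zpowers_pow_sup_zpowers_pow (x : G) (a b : ℕ) :
    zpowers (x ^ a) ⊔ zpowers (x ^ b) = zpowers (x ^ Nat.gcd a b) := by
  have hdvd {n : ℕ} (h : Nat.gcd a b ∣ n) : x ^ n ∈ zpowers (x ^ Nat.gcd a b) := by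
    obtain ⟨c, rfl⟩ := h
    rw [pow_mul]
    exact npow_mem_zpowers _ _
  apply le_antisymm
  · exact sup_le (zpowers_le.mpr (hdvd (Nat.gcd_dvd_left a b)))
      (zpowers_le.mpr (hdvd (Nat.gcd_dvd_right a b)))
  · rw [zpowers_le, ← zpow_natCast x (Nat.gcd a b), Nat.gcd_eq_gcd_ab, zpow_add, zpow_mul,
      zpow_mul]
    exact mul_mem (mem_sup_left (zpow_mem (by simp) _))
      (mem_sup_right (zpow_mem (by simp) _))

theorem eq_zpowers_pow_natCard_div [Finite G] {α : G} (hα : ∀ x, x ∈ zpowers α)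
    (H : Subgroup G) : H = zpowers (α ^ (Nat.card G / Nat.card H)) := by
  have hαord : orderOf α = Nat.card G := orderOf_eq_card_of_forall_mem_zpowers hα
  have hdvd : Nat.card H ∣ Nat.card G := H.card_subgroup_dvd_card
  have hcard : Nat.card (zpowers (α ^ (Nat.card G / Nat.card H))) = Nat.card H := by
    rw [Nat.card_zpowers, ← hαord, orderOf_pow_orderOf_div (orderOf_pos α).ne' (hαord ▸ hdvd)]
  refine eq_of_le_of_card_ge (fun x hx => ?_) hcard.le
  obtain ⟨k, rfl⟩ := mem_powers_iff_mem_zpowers.mpr (hα x)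
  have hpow : α ^ (k * Nat.card H) = 1 := by
    rw [pow_mul]
    exact congrArg Subtype.val (pow_card_eq_one' (x := (⟨α ^ k, hx⟩ : H)))
  have hk : Nat.card G / Nat.card H ∣ k := by
    refine Nat.dvd_of_mul_dvd_mul_right (Nat.card_pos (α := H)) ?_
    rw [Nat.div_mul_cancel hdvd, ← hαord]
    exact orderOf_dvd_of_pow_eq_one hpow
  obtain ⟨c, rfl⟩ := hk
  show α ^ (_ * c) ∈ _
  rw [pow_mul]
  exact npow_mem_zpowers _ _

theorem sup_eq_zpowers_pow_gcd [Finite G] {α : G} (hα : ∀ x, x ∈ zpowers α)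
    (A B : Subgroup G) :
    A ⊔ B = zpowers (α ^ Nat.gcd (Nat.card G / Nat.card A) (Nat.card G / Nat.card B)) := by
  conv_lhs => rw [eq_zpowers_pow_natCard_div hα A, eq_zpowers_pow_natCard_div hα B]
  exact zpowers_pow_sup_zpowers_pow α _ _

end Cyclic

section Commutative

variable {G : Type*} [CommGroup G]

theorem natCard_mul_fiber_eq_natCard_inf (A B : Subgroup G) {z : G} (hz : z ∈ A ⊔ B) :
    Nat.card {x : A × B // (x.1 : G) * x.2 = z} = Nat.card (A ⊓ B : Subgroup G) := by
  obtain ⟨a₀, ha₀, b₀, hb₀, rfl⟩ := mem_sup.mp hz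
  have hfiber (x : {x : A × B // (x.1 : G) * x.2 = a₀ * b₀}) :
      a₀⁻¹ * x.1.1 = b₀ * (x.1.2 : G)⁻¹ := by
    rw [inv_mul_eq_iff_eq_mul, ← mul_assoc, eq_mul_inv_iff_mul_eq, x.2]
  exact Nat.card_congr
    { toFun := fun x => ⟨a₀⁻¹ * x.1.1, mem_inf.mpr ⟨mul_mem (inv_mem ha₀) x.1.1.2,
        hfiber x ▸ mul_mem hb₀ (inv_mem x.1.2.2)⟩⟩
      invFun := fun c => ⟨(⟨a₀ * c, mul_mem ha₀ (mem_inf.mp c.2).1⟩,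
        ⟨c⁻¹ * b₀, mul_mem (inv_mem (mem_inf.mp c.2).2) hb₀⟩), by simp [mul_assoc]⟩
      left_inv := fun x => by
        ext
        · simp
        · simp [hfiber x]
      right_inv := fun c => by ext; simp }

open scoped Classical in
theorem sum_prod_mul_eq_natCard_inf_smul [Fintype G] {M : Type*} [AddCommMonoid M]
    (A B : Subgroup G) (f : G → M) :
    ∑ x : A × B, f (x.1 * x.2) =
      Nat.card (A ⊓ B : Subgroup G) • ∑ z : (A ⊔ B : Subgroup G), f z := by
  let μ : A × B → (A ⊔ B : Subgroup G) :=
    fun x => ⟨x.1 * x.2, mul_mem (mem_sup_left x.1.2) (mem_sup_right x.2.2)⟩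
  rw [← Fintype.sum_fiberwise' μ (fun z => f z), smul_sum]
  refine Fintype.sum_congr _ _ fun z => ?_
  rw [sum_const, card_univ, ← Nat.card_eq_fintype_card,
    ← natCard_mul_fiber_eq_natCard_inf A B z.2]
  congr 1
  exact Nat.card_congr (Equiv.subtypeEquivRight fun x => Subtype.ext_iff)

theorem natCard_mul_natCard_eq_natCard_inf_mul_natCard_sup [Finite G] (A B : Subgroup G) :
    Nat.card A * Nat.card B =
      Nat.card (A ⊓ B : Subgroup G) * Nat.card (A ⊔ B : Subgroup G) := by
  classical
  have := Fintype.ofFinite G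
  have h := sum_prod_mul_eq_natCard_inf_smul A B (fun _ => (1 : ℕ))
  simp only [sum_const, card_univ, Fintype.card_prod, smul_eq_mul, mul_one] at h
  simpa [Nat.card_eq_fintype_card] using h

theorem natCard_inf_mul_div_natCard [Finite G] {α : G} (hα : ∀ x, x ∈ zpowers α)
    (A B : Subgroup G) :
    Nat.card (A ⊓ B : Subgroup G) * (Nat.card G / Nat.card B) =
      Nat.card A * Nat.gcd (Nat.card G / Nat.card A) (Nat.card G / Nat.card B) := by
  set e := Nat.gcd (Nat.card G / Nat.card A) (Nat.card G / Nat.card B)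
  have hαord : orderOf α = Nat.card G := orderOf_eq_card_of_forall_mem_zpowers hα
  have hB : Nat.card G / Nat.card B * Nat.card B = Nat.card G :=
    Nat.div_mul_cancel B.card_subgroup_dvd_card
  have he : e ∣ Nat.card G :=
    (Nat.gcd_dvd_right _ _).trans (Nat.div_dvd_of_dvd B.card_subgroup_dvd_card)
  have he0 : e ≠ 0 :=
    (Nat.gcd_pos_of_pos_right _ (Nat.div_pos B.card_le_card_group Nat.card_pos)).ne'
  have hcard := natCard_mul_natCard_eq_natCard_inf_mul_natCard_sup A B
  rw [sup_eq_zpowers_pow_gcd hα, Nat.card_zpowers, orderOf_pow_of_dvd he0 (hαord ▸ he),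
    hαord] at hcard
  refine Nat.eq_of_mul_eq_mul_right (Nat.card_pos (α := B)) ?_
  calc Nat.card (A ⊓ B : Subgroup G) * (Nat.card G / Nat.card B) * Nat.card B
      = Nat.card (A ⊓ B : Subgroup G) * (Nat.card G / e) * e := by
        rw [mul_assoc, hB, mul_assoc, Nat.div_mul_cancel he]
    _ = Nat.card A * e * Nat.card B := by rw [← hcard]; ring

end Commutative

end Subgroup

open scoped Classical in
theorem sum_range_orderOf_pow {G M : Type*} [Group G] [Fintype G] [AddCommMonoid M] (x : G)
    (f : G → M) : ∑ t ∈ range (orderOf x), f (x ^ t) = ∑ z : Subgroup.zpowers x, f z := by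
  rw [← Fin.sum_univ_eq_sum_range (fun t => f (x ^ t))]
  exact Fintype.sum_equiv (finEquivZPowers (isOfFinOrder_of_finite x)) _ _ fun _ => rfl

theorem Function.Periodic.sum_range_mul {M : Type*} [AddCommMonoid M] {f : ℕ → M} {n : ℕ}
    (hf : Function.Periodic f n) (k : ℕ) :
    ∑ t ∈ range (n * k), f t = k • ∑ t ∈ range n, f t := by
  induction k with
  | zero => simp
  | succ k ih =>
    rw [Nat.mul_succ, sum_range_add, ih, succ_nsmul]
    congr 1
    exact sum_congr rfl fun t _ => by rw [add_comm, mul_comm]; exact (hf.nat_mul k) t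

theorem natCast_hammingNorm {ι K R : Type*} [Fintype ι] [Zero K] [DecidableEq K] [Semiring R]
    (x : ι → K) : (hammingNorm x : R) = ∑ i, if x i = 0 then 0 else 1 := by
  simp [hammingNorm, card_filter, ite_not]

open Subgroup

open scoped Classical in
theorem card_mul_hammingNorm_trace (p : ℕ) [Fact p.Prime] (K F : Type*) [Field K] [Fintype K]
    [DecidableEq K] [Field F] [Fintype F] [Algebra (ZMod p) F] [Algebra K F]
    (a : F) (g : Fˣ) (k : ℕ) :
    (Fintype.card K : ℂ) *
        hammingNorm (fun t : Fin (orderOf g * k) => Algebra.trace K F (a * (g : F) ^ (t : ℕ))) =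
      (Fintype.card K - 1) * (orderOf g * k) -
        k * ∑ x : baseFieldUnits K F × zpowers g, psi p F (a * (x.1 * x.2 : Fˣ)) := by
  set S : ℕ → ℂ := fun t => ∑ z : baseFieldUnits K F, psi p F ((z : Fˣ) * (a * (g : F) ^ t))
  have hS : Function.Periodic S (orderOf g) := fun t => by
    simp only [S, pow_add, ← Units.val_pow_eq_pow_val, pow_orderOf_eq_one, mul_one]
  have hSsum : ∑ t ∈ range (orderOf g), S t =
      ∑ x : baseFieldUnits K F × zpowers g, psi p F (a * (x.1 * x.2 : Fˣ)) := by
    rw [Fintype.sum_prod_type, sum_comm]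
    refine sum_congr rfl fun z _ => ?_
    simp only [← Units.val_pow_eq_pow_val]
    rw [sum_range_orderOf_pow g (fun w => psi p F ((z : Fˣ) * (a * (w : F))))]
    simp only [Units.val_mul, mul_left_comm]
  rw [natCast_hammingNorm, mul_sum, Fin.sum_univ_eq_sum_range
    (fun t => (Fintype.card K : ℂ) * if Algebra.trace K F (a * (g : F) ^ t) = 0 then 0 else 1)]
  simp_rw [card_mul_indicator_trace_ne_zero p K F]
  rw [sum_sub_distrib, hS.sum_range_mul, hSsum, sum_const, card_range, nsmul_eq_mul,
    nsmul_eq_mul]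
  push_cast
  ring

open scoped Classical in
theorem gaussPeriod_eq_sum_zpowers (p : ℕ) (F : Type*) [Field F] [Fintype F]
    [Algebra (ZMod p) F] {α : Fˣ} (hα : ∀ x, x ∈ zpowers α) {N j : ℕ}
    (hN : N ∣ Fintype.card F - 1) {a : F} (ha : a ∈ cClass F α N j) :
    gaussPeriod p F α N j = ∑ z : zpowers (α ^ N), psi p F (a * (z : Fˣ)) := by
  have hαord : orderOf α = Fintype.card F - 1 := by
    rw [orderOf_eq_card_of_forall_mem_zpowers hα, Nat.card_eq_fintype_card, Fintype.card_units]
  have hN0 : N ≠ 0 := by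
    rintro rfl
    have := Fintype.one_lt_card (α := F)
    omega
  obtain ⟨t₀, rfl⟩ := ha
  rw [gaussPeriod, ← hαord, ← orderOf_pow_of_dvd hN0 (hαord ▸ hN)]
  simp_rw [pow_add, pow_mul]
  rw [sum_range_orderOf_pow (α ^ N) (fun z => psi p F ↑(α ^ j * z))]
  exact (Fintype.sum_equiv (Equiv.mulLeft ⟨_, npow_mem_zpowers (α ^ N) t₀⟩) _ _
    fun z => by simp [mul_assoc]).symm

theorem stmt3_general (p : ℕ) [Fact p.Prime]
    (K F : Type*) [Field K] [Fintype K] [DecidableEq K] [Field F] [Fintype F]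
    [Algebra (ZMod p) F] [Algebra K F]
    (α : Fˣ) (hα : ∀ x : Fˣ, x ∈ Subgroup.zpowers α)
    (g₁ g₂ : Fˣ) (n₁ n₂ : ℕ) (h₁ : orderOf g₁ = n₁)
    (N₀ N₁ d₁ : ℕ)
    (hN₀ : N₀ = (Fintype.card F - 1) / (Fintype.card K - 1))
    (hN₁ : N₁ = (Fintype.card F - 1) / n₁)
    (hd₁ : d₁ = Nat.gcd N₀ N₁)
    (a b : F) (j : ℕ) (ha : a ∈ cClass F α d₁ j) (hb : b = 0) :
    (hammingNorm (fun t : Fin (n₁ * n₂) =>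
        Algebra.trace K F (a * (g₁ : F) ^ (t : ℕ) + b * (g₂ : F) ^ (t : ℕ))) : ℂ)
      = ((Fintype.card K : ℂ) - 1) * (n₁ : ℂ) * (n₂ : ℂ) / (Fintype.card K : ℂ)
        - ((Fintype.card K : ℂ) - 1) * (d₁ : ℂ) * (n₂ : ℂ)
            / ((Fintype.card K : ℂ) * (N₁ : ℂ)) * gaussPeriod p F α d₁ j := by
  classical
  subst hb h₁
  simp only [zero_mul, add_zero]
  have hM : Nat.card Fˣ = Fintype.card F - 1 := by
    rw [Nat.card_eq_fintype_card, Fintype.card_units]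
  have hA : Nat.card (baseFieldUnits K F) = Fintype.card K - 1 := by
    rw [natCard_baseFieldUnits, Nat.card_eq_fintype_card]
  have hsup : baseFieldUnits K F ⊔ zpowers g₁ = zpowers (α ^ d₁) := by
    rw [sup_eq_zpowers_pow_gcd hα, hA, Nat.card_zpowers, hM, ← hN₀, ← hN₁, ← hd₁]
  have hinf : (Nat.card (baseFieldUnits K F ⊓ zpowers g₁ : Subgroup Fˣ) : ℂ) * N₁ =
      (Fintype.card K - 1) * d₁ := by
    have h := natCard_inf_mul_div_natCard hα (baseFieldUnits K F) (zpowers g₁)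
    rw [hA, Nat.card_zpowers, hM, ← hN₀, ← hN₁, ← hd₁] at h
    rw [← Nat.cast_pred Fintype.card_pos]
    exact_mod_cast h
  have hg₁ : orderOf g₁ ∣ Fintype.card F - 1 := hM ▸ orderOf_dvd_natCard g₁
  have hN₁0 : N₁ ≠ 0 :=
    hN₁ ▸ (Nat.div_pos (Nat.le_of_dvd (hM ▸ Nat.card_pos) hg₁) (orderOf_pos g₁)).ne'
  have hd₁M : d₁ ∣ Fintype.card F - 1 :=
    hd₁ ▸ (Nat.gcd_dvd_right _ _).trans (hN₁ ▸ Nat.div_dvd_of_dvd hg₁)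
  have hweight := card_mul_hammingNorm_trace p K F a g₁ n₂
  rw [sum_prod_mul_eq_natCard_inf_smul _ _ (fun z : Fˣ => psi p F (a * z)), hsup,
    ← gaussPeriod_eq_sum_zpowers p F hα hd₁M ha, nsmul_eq_mul] at hweight
  have hq : (Fintype.card K : ℂ) ≠ 0 := Nat.cast_ne_zero.mpr Fintype.card_ne_zero
  field_simp
  linear_combination (N₁ : ℂ) * hweight - (n₂ : ℂ) * gaussPeriod p F α d₁ j * hinf

/-- if `a ∈ C_j^{(d₁,r)}` and `b = 0`, the weight of `c(a,b)` is
`(q-1)n₁n₂/q - ((q-1)d₁n₂/(qN₁))·η_j^{(d₁,r)}`. -/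
theorem stmt3 (p s m : ℕ) [Fact p.Prime] (hs : 0 < s) (hm : 0 < m)
    (K F : Type*) [Field K] [Fintype K] [DecidableEq K] [Field F] [Fintype F]
    [Algebra (ZMod p) F] [Algebra K F]
    (hq : Fintype.card K = p ^ s) (hr : Fintype.card F = Fintype.card K ^ m)
    (α : Fˣ) (hα : ∀ x : Fˣ, x ∈ Subgroup.zpowers α)
    (g₁ g₂ : Fˣ) (n₁ n₂ : ℕ) (h₁ : orderOf g₁ = n₁) (h₂ : orderOf g₂ = n₂)
    (hcop : Nat.Coprime n₁ n₂)
    (N₀ N₁ N₂ d₁ d₂ d : ℕ)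
    (hN₀ : N₀ = (Fintype.card F - 1) / (Fintype.card K - 1))
    (hN₁ : N₁ = (Fintype.card F - 1) / n₁)
    (hN₂ : N₂ = (Fintype.card F - 1) / n₂)
    (hd₁ : d₁ = Nat.gcd N₀ N₁) (hd₂ : d₂ = Nat.gcd N₀ N₂)
    (hd : d = Nat.gcd (N₀ * N₂ / d₂) N₁)
    (a b : F) (j : ℕ) (hj : j < d₁) (ha : a ∈ cClass F α d₁ j) (hb : b = 0) :
    (hammingNorm (fun t : Fin (n₁ * n₂) =>
        Algebra.trace K F (a * (g₁ : F) ^ (t : ℕ) + b * (g₂ : F) ^ (t : ℕ))) : ℂ)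
      = ((Fintype.card K : ℂ) - 1) * (n₁ : ℂ) * (n₂ : ℂ) / (Fintype.card K : ℂ)
        - ((Fintype.card K : ℂ) - 1) * (d₁ : ℂ) * (n₂ : ℂ)
            / ((Fintype.card K : ℂ) * (N₁ : ℂ)) * gaussPeriod p F α d₁ j :=
  stmt3_general p K F α hα g₁ g₂ n₁ n₂ h₁ N₀ N₁ d₁ hN₀ hN₁ hd₁ a b j ha hb
end

section
/- Let N_2 be a divisor of r − 1, N_0 = (r−1)/(q−1), and d_2 = gcd(N_0, N_2). Then N_2/d_2 divides q − 1, and the multiplicative group F_q^* (viewed inside F_r^* via the inclusion F_q ⊆ F_r) is the disjoint union of the cosets C_{N_0 i}^{(N_0 N_2/d_2, r)} = α^{N_0 i}⟨α^{N_0 N_2/d_2}⟩ for i = 0, 1, …, N_2/d_2 − 1. -/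
/-- `N₂/d₂ ∣ q - 1` and `F_q^*` (inside `F_r^*`) is the disjoint union of the
cosets `C_{N₀ i}^{(N₀N₂/d₂, r)}` for `0 ≤ i < N₂/d₂`. -/
theorem stmt6 (p s m : ℕ) [Fact p.Prime] (hs : 0 < s) (hm : 0 < m)
    (K F : Type*) [Field K] [Fintype K] [Field F] [Fintype F] [Algebra K F]
    (hq : Fintype.card K = p ^ s) (hr : Fintype.card F = Fintype.card K ^ m)
    (α : Fˣ) (hα : ∀ x : Fˣ, x ∈ Subgroup.zpowers α)
    (N₀ N₂ d₂ : ℕ) (hN₂ : N₂ ∣ Fintype.card F - 1)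
    (hN₀ : N₀ = (Fintype.card F - 1) / (Fintype.card K - 1))
    (hd₂ : d₂ = Nat.gcd N₀ N₂) :
    (N₂ / d₂ ∣ Fintype.card K - 1) ∧
    (Set.range (fun y : Kˣ => algebraMap K F (y : K))
        = ⋃ i ∈ Finset.range (N₂ / d₂), cClass F α (N₀ * N₂ / d₂) (N₀ * i)) ∧
    (∀ i < N₂ / d₂, ∀ j < N₂ / d₂, i ≠ j →
        Disjoint (cClass F α (N₀ * N₂ / d₂) (N₀ * i))
          (cClass F α (N₀ * N₂ / d₂) (N₀ * j))) := by
  classical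
  set q := Fintype.card K with hqdef
  set r := Fintype.card F with hrdef
  have hq2 : 1 < q := Fintype.one_lt_card
  have hr2 : 1 < r := Fintype.one_lt_card
  have hqpos : 0 < q - 1 := Nat.sub_pos_of_lt hq2
  have hrpos : 0 < r - 1 := Nat.sub_pos_of_lt hr2
  have hdvd : q - 1 ∣ r - 1 := by
    rw [hr]; simpa using Nat.sub_dvd_pow_sub_pow q 1 m
  have hN₀mul : N₀ * (q - 1) = r - 1 := by
    rw [hN₀]; exact Nat.div_mul_cancel hdvd
  have hN₀pos : 0 < N₀ := Nat.pos_of_ne_zero (by rintro rfl; simp at hN₀mul; omega)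
  have hN₂pos : 0 < N₂ := Nat.pos_of_dvd_of_pos hN₂ hrpos
  have hd₂dvd : d₂ ∣ N₂ := hd₂ ▸ Nat.gcd_dvd_right _ _
  have hd₂dvd' : d₂ ∣ N₀ := hd₂ ▸ Nat.gcd_dvd_left _ _
  have hd₂pos : 0 < d₂ := hd₂ ▸ Nat.gcd_pos_of_pos_right _ hN₂pos
  set n := N₂ / d₂ with hn
  have hnd : d₂ * n = N₂ := Nat.mul_div_cancel' hd₂dvd
  have hnpos : 0 < n := Nat.div_pos (Nat.le_of_dvd hN₂pos hd₂dvd) hd₂pos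
  -- Part 1 : n ∣ q - 1
  have hcop : Nat.Coprime n (N₀ / d₂) := by
    rw [hn, hd₂]
    exact (Nat.coprime_div_gcd_div_gcd (hd₂ ▸ hd₂pos)).symm
  have h1 : n ∣ q - 1 := by
    have h : N₂ ∣ N₀ * (q - 1) := hN₀mul ▸ hN₂
    have hd0 : d₂ * (N₀ / d₂) = N₀ := Nat.mul_div_cancel' hd₂dvd'
    have h2 : d₂ * n ∣ d₂ * (N₀ / d₂ * (q - 1)) := by
      rw [hnd, ← mul_assoc, hd0]; exact h
    have h3 : n ∣ N₀ / d₂ * (q - 1) :=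
      (mul_dvd_mul_iff_left (show d₂ ≠ 0 from hd₂pos.ne')).mp h2
    exact hcop.dvd_of_dvd_mul_left h3
  -- order of α
  have hord : orderOf α = r - 1 := by
    rw [orderOf_eq_card_of_forall_mem_zpowers hα, Nat.card_units, Nat.card_eq_fintype_card]
  have hNn : N₀ * N₂ / d₂ = N₀ * n := Nat.mul_div_assoc N₀ hd₂dvd
  rw [hNn]
  -- image characterization
  have hmemA : ∀ x : F, (∃ y : Kˣ, algebraMap K F (y : K) = x) →
      ∃ k, x = ((α ^ (N₀ * k) : Fˣ) : F) := by
    rintro x ⟨y, rfl⟩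
    set u : Fˣ := Units.map (algebraMap K F).toMonoidHom y with hu
    obtain ⟨k, hk⟩ := ((isOfFinOrder_of_finite α).mem_powers_iff_mem_zpowers.mpr
      (hα u)).imp (fun k hk => hk)
    have hy1 : y ^ (q - 1) = 1 := by
      rw [← Fintype.card_units]; exact pow_card_eq_one
    have hu1 : u ^ (q - 1) = 1 := by
      rw [hu, ← map_pow, hy1, map_one]
    have hdk : N₀ * (q - 1) ∣ k * (q - 1) := by
      rw [hN₀mul, ← hord]
      refine orderOf_dvd_of_pow_eq_one ?_
      have hk' : α ^ k = u := hk
      rw [pow_mul, hk', hu1]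
    obtain ⟨k', hk'⟩ := (Nat.mul_dvd_mul_iff_right hqpos).mp hdk
    refine ⟨k', ?_⟩
    have : (u : F) = ((α ^ (N₀ * k') : Fˣ) : F) := by rw [← hk', ← hk]
    simpa [hu] using this
  -- the union as a set of powers
  have hTchar : ∀ x : F, (x ∈ ⋃ i ∈ Finset.range n, cClass F α (N₀ * n) (N₀ * i)) ↔
      ∃ k : ℕ, x = ((α ^ (N₀ * k) : Fˣ) : F) := by
    intro x
    simp only [Set.mem_iUnion, Finset.mem_range, cClass, Set.mem_setOf_eq]
    constructor
    · rintro ⟨i, hi, t, rfl⟩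
      exact ⟨i + n * t, by rw [mul_add, mul_assoc]⟩
    · rintro ⟨k, rfl⟩
      refine ⟨k % n, Nat.mod_lt _ hnpos, k / n, ?_⟩
      congr 1
      rw [mul_assoc, ← mul_add, Nat.mod_add_div]
  -- order of α ^ N₀
  have hβ : orderOf (α ^ N₀) = q - 1 := by
    rw [orderOf_pow, hord, ← hN₀mul,
      Nat.gcd_eq_right (Dvd.intro _ rfl), Nat.mul_div_cancel_left _ hN₀pos]
  -- injectivity of the embedding
  have hinj : Function.Injective (fun y : Kˣ => algebraMap K F (y : K)) := by
    intro a b hab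
    exact Units.ext ((algebraMap K F).injective hab)
  have hcardR : (Set.range (fun y : Kˣ => algebraMap K F (y : K))).ncard = q - 1 := by
    rw [← Set.image_univ, Set.ncard_image_of_injective _ hinj, Set.ncard_univ,
      Nat.card_eq_fintype_card, Fintype.card_units]
  -- the union is contained in the range of a map from Fin (q-1)
  have hTsub : (⋃ i ∈ Finset.range n, cClass F α (N₀ * n) (N₀ * i)) ⊆
      Set.range (fun i : Fin (q - 1) => (((α ^ N₀) ^ (i : ℕ) : Fˣ) : F)) := by
    intro x hx
    obtain ⟨k, rfl⟩ := (hTchar x).mp hx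
    refine ⟨⟨k % (q - 1), Nat.mod_lt _ hqpos⟩, ?_⟩
    have : (α ^ N₀) ^ (k % (q - 1)) = (α ^ N₀) ^ k := by
      rw [pow_eq_pow_iff_modEq, hβ]
      exact (Nat.mod_modEq k (q - 1))
    simp only [this, ← pow_mul]
  have hTcard : (⋃ i ∈ Finset.range n, cClass F α (N₀ * n) (N₀ * i)).ncard ≤ q - 1 := by
    refine le_trans (Set.ncard_le_ncard hTsub (Set.toFinite _)) ?_
    calc (Set.range fun i : Fin (q - 1) => (((α ^ N₀) ^ (i : ℕ) : Fˣ) : F)).ncard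
        ≤ (Set.univ : Set (Fin (q - 1))).ncard := by
          rw [← Set.image_univ]; exact Set.ncard_image_le (Set.toFinite _)
      _ = q - 1 := by rw [Set.ncard_univ, Nat.card_eq_fintype_card, Fintype.card_fin]
  have hsub : Set.range (fun y : Kˣ => algebraMap K F (y : K)) ⊆
      ⋃ i ∈ Finset.range n, cClass F α (N₀ * n) (N₀ * i) := by
    rintro x ⟨y, rfl⟩
    exact (hTchar _).mpr (hmemA _ ⟨y, rfl⟩)
  refine ⟨h1, (Set.eq_of_subset_of_ncard_le hsub (hcardR ▸ hTcard) (Set.toFinite _)), ?_⟩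
  -- disjointness
  intro i hi j hj hij
  rw [Set.disjoint_left]
  rintro x ⟨t, rfl⟩ ⟨u', hu'⟩
  have heq : α ^ (N₀ * i + N₀ * n * t) = α ^ (N₀ * j + N₀ * n * u') :=
    Units.ext hu'
  have hmod : N₀ * i + N₀ * n * t ≡ N₀ * j + N₀ * n * u' [MOD N₀ * n] := by
    have h0 : N₀ * i + N₀ * n * t ≡ N₀ * j + N₀ * n * u' [MOD r - 1] := by
      rw [← hord]; exact pow_eq_pow_iff_modEq.mp heq
    exact h0.of_dvd (by rw [← hN₀mul]; exact Nat.mul_dvd_mul_left _ h1)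
  have hii : N₀ * i ≡ N₀ * j [MOD N₀ * n] := by
    have ha : N₀ * n * t ≡ 0 [MOD N₀ * n] := (Nat.modEq_zero_iff_dvd).mpr ⟨t, rfl⟩
    have hb : N₀ * n * u' ≡ 0 [MOD N₀ * n] := (Nat.modEq_zero_iff_dvd).mpr ⟨u', rfl⟩
    calc N₀ * i = N₀ * i + 0 := by ring
      _ ≡ N₀ * i + N₀ * n * t [MOD N₀ * n] := (Nat.ModEq.refl _).add ha.symm
      _ ≡ N₀ * j + N₀ * n * u' [MOD N₀ * n] := hmod
      _ ≡ N₀ * j + 0 [MOD N₀ * n] := (Nat.ModEq.refl _).add hb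
      _ = N₀ * j := by ring
  have : i ≡ j [MOD n] := Nat.ModEq.mul_left_cancel' hN₀pos.ne' hii
  exact hij (by rw [Nat.ModEq] at this; rwa [Nat.mod_eq_of_lt hi, Nat.mod_eq_of_lt hj] at this)
end

section
/- Let q = 2, r = 2^m, and let g_1, g_2 ∈ F_r^* have orders n_1, n_2 with gcd(n_1, n_2) = 1, N_1 = (r−1)/n_1, N_2 = (r−1)/n_2. Suppose a ∈ C_j^{(N_1, r)} and b ∈ C_k^{(N_2, r)} for some 0 ≤ j ≤ N_1 − 1, 0 ≤ k ≤ N_2 − 1, and c ∈ F_r. Then the Hamming weight of c(a, b, c) equals n_1 n_2/2 − (1/2) η_j^{(N_1, r)} η_k^{(N_2, r)} if Tr_{r/2}(c) = 0, and equals n_1 n_2/2 + (1/2) η_j^{(N_1, r)} η_k^{(N_2, r)} if Tr_{r/2}(c) = 1 (equalities after casting the weight into ℂ). -/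
lemma neg_one_pow_mod_two (n : ℕ) : ((-1 : ℂ)) ^ (n % 2) = (-1 : ℂ) ^ n := by
  conv_rhs => rw [← Nat.mod_add_div n 2]
  rw [pow_add, pow_mul]
  norm_num

lemma psi_eq (F : Type*) [Field F] [Fintype F] [Algebra (ZMod 2) F] (x : F) :
    psi 2 F x = (-1 : ℂ) ^ ((Algebra.trace (ZMod 2) F x).val) := by
  unfold psi
  have h : 2 * (Real.pi : ℂ) * Complex.I * (((Algebra.trace (ZMod 2) F x).val : ℕ) : ℂ) / (2:ℕ)
      = (((Algebra.trace (ZMod 2) F x).val : ℕ) : ℂ) * ((Real.pi : ℂ) * Complex.I) := by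
    push_cast; ring
  rw [h, Complex.exp_nat_mul, Complex.exp_pi_mul_I]

lemma psi_add (F : Type*) [Field F] [Fintype F] [Algebra (ZMod 2) F] (x y : F) :
    psi 2 F (x + y) = psi 2 F x * psi 2 F y := by
  rw [psi_eq, psi_eq, psi_eq, map_add, ZMod.val_add, neg_one_pow_mod_two, pow_add]

lemma crt_sum (n₁ n₂ : ℕ) (h₁ : 0 < n₁) (h₂ : 0 < n₂) (hcop : Nat.Coprime n₁ n₂)
    (u v : ℕ → ℂ) :
    ∑ t ∈ Finset.range (n₁ * n₂), u (t % n₁) * v (t % n₂)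
      = (∑ s ∈ Finset.range n₁, u s) * (∑ w ∈ Finset.range n₂, v w) := by
  rw [Finset.sum_mul_sum, ← Finset.sum_product']
  have hpos : 0 < n₁ * n₂ := Nat.mul_pos h₁ h₂
  refine Finset.sum_nbij' (fun t => (t % n₁, t % n₂))
    (fun p => (Nat.chineseRemainder hcop p.1 p.2 : ℕ) % (n₁ * n₂)) ?_ ?_ ?_ ?_ ?_
  · intro t ht
    simp only [Finset.mem_product, Finset.mem_range]
    exact ⟨Nat.mod_lt _ h₁, Nat.mod_lt _ h₂⟩
  · intro p hp
    exact Finset.mem_range.2 (Nat.mod_lt _ hpos)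
  · intro t ht
    have ht' : t < n₁ * n₂ := Finset.mem_range.1 ht
    have hk₁ := (Nat.chineseRemainder hcop (t % n₁) (t % n₂)).2.1
    have hk₂ := (Nat.chineseRemainder hcop (t % n₁) (t % n₂)).2.2
    have e₁ : (Nat.chineseRemainder hcop (t % n₁) (t % n₂) : ℕ) ≡ t [MOD n₁] :=
      hk₁.trans (Nat.mod_modEq t n₁)
    have e₂ : (Nat.chineseRemainder hcop (t % n₁) (t % n₂) : ℕ) ≡ t [MOD n₂] :=
      hk₂.trans (Nat.mod_modEq t n₂)
    have h : (Nat.chineseRemainder hcop (t % n₁) (t % n₂) : ℕ) ≡ t [MOD n₁ * n₂] :=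
      (Nat.modEq_and_modEq_iff_modEq_mul hcop).1 ⟨e₁, e₂⟩
    have := h.symm
    unfold Nat.ModEq at this
    rw [Nat.mod_eq_of_lt ht'] at this
    exact this.symm
  · rintro ⟨s, w⟩ hp
    simp only [Finset.mem_product, Finset.mem_range] at hp
    have hk₁ := (Nat.chineseRemainder hcop s w).2.1
    have hk₂ := (Nat.chineseRemainder hcop s w).2.2
    unfold Nat.ModEq at hk₁ hk₂
    replace hk₁ := hk₁.trans (Nat.mod_eq_of_lt hp.1)
    replace hk₂ := hk₂.trans (Nat.mod_eq_of_lt hp.2)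
    have d₁ : n₁ ∣ n₁ * n₂ := dvd_mul_right _ _
    have d₂ : n₂ ∣ n₁ * n₂ := dvd_mul_left _ _
    refine Prod.ext ?_ ?_
    · simpa [Nat.mod_mod_of_dvd _ d₁] using hk₁
    · simpa [Nat.mod_mod_of_dvd _ d₂] using hk₂
  · intro t ht; rfl

lemma ham_cast (n : ℕ) (f : Fin n → ZMod 2) :
    (hammingNorm f : ℂ) = ∑ t : Fin n, (1 - (-1 : ℂ) ^ ((f t).val)) / 2 := by
  have h01 : ∀ val : ZMod 2, val = 0 ∨ val = 1 := by decide
  rw [hammingNorm, Finset.card_filter, Nat.cast_sum]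
  refine Finset.sum_congr rfl fun t _ => ?_
  rcases h01 (f t) with h | h <;> simp [h, ZMod.val_one]

lemma psi_inner_sum_eq_gaussPeriod (F : Type*) [Field F] [Fintype F] [Algebra (ZMod 2) F]
    (α : Fˣ) (hα : ∀ x : Fˣ, x ∈ Subgroup.zpowers α)
    (g : Fˣ) (n N j : ℕ) (hn : orderOf g = n) (hNpos : 0 < N)
    (hNn : N * n = Fintype.card F - 1)
    (a : F) (ha : a ∈ cClass F α N j) :
    ∑ s ∈ Finset.range n, psi 2 F (a * (g : F) ^ s) = gaussPeriod 2 F α N j := by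
  classical
  obtain ⟨t₀, rfl⟩ := ha
  have npos : 0 < n := hn ▸ orderOf_pos g
  have hcard : (Fintype.card F - 1) / N = n := by
    rw [← hNn, Nat.mul_div_cancel_left _ hNpos]
  have hordα : orderOf α = N * n := by
    rw [orderOf_eq_card_of_forall_mem_zpowers hα, Nat.card_eq_fintype_card,
      Fintype.card_units, hNn]
  set β : Fˣ := α ^ N with hβ
  have hordβ : orderOf β = n := by
    rw [hβ, orderOf_pow, hordα, Nat.gcd_eq_right (dvd_mul_right N n),
      Nat.mul_div_cancel_left _ hNpos]
  -- g is a power of β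
  obtain ⟨e, hk0⟩ := hα g
  have hk : α ^ e = g := hk0
  have hg1 : α ^ (e * (n : ℤ)) = 1 := by
    rw [zpow_mul, hk]
    rw [zpow_natCast, ← hn, pow_orderOf_eq_one]
  have hdvd : ((N : ℤ) * n) ∣ e * n := by
    have := orderOf_dvd_iff_zpow_eq_one.2 hg1
    rw [hordα] at this
    exact_mod_cast this
  obtain ⟨f, hf⟩ : (N : ℤ) ∣ e := by
    obtain ⟨f, hf⟩ := hdvd
    refine ⟨f, mul_right_cancel₀ (b := (n : ℤ)) (by exact_mod_cast npos.ne') ?_⟩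
    rw [hf]; ring
  have hgf : g = β ^ f := by
    rw [← hk, hf, hβ, zpow_mul, zpow_natCast]
  -- every integer power of β is β^t with t < n
  have M : ∀ z : ℤ, ∃ t, t < n ∧ β ^ z = β ^ t := by
    intro z
    have h0 : (0 : ℤ) < n := by exact_mod_cast npos
    have hnn : (0 : ℤ) ≤ z % n := Int.emod_nonneg z (by exact_mod_cast npos.ne')
    have hlt := Int.emod_lt_of_pos z h0
    have key := zpow_mod_orderOf β z
    rw [hordβ] at key
    refine ⟨(z % (n : ℤ)).toNat, by omega, ?_⟩
    rw [← zpow_natCast, Int.toNat_of_nonneg hnn, key]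
  -- images
  have hinj₂ : ∀ x ∈ Finset.range n, ∀ y ∈ Finset.range n, β ^ x = β ^ y → x = y := by
    intro x hx y hy hxy
    exact pow_injOn_Iio_orderOf (by simpa [hordβ] using Finset.mem_range.1 hx)
      (by simpa [hordβ] using Finset.mem_range.1 hy) hxy
  have hinj₁ : ∀ x ∈ Finset.range n, ∀ y ∈ Finset.range n,
      β ^ t₀ * g ^ x = β ^ t₀ * g ^ y → x = y := by
    intro x hx y hy hxy
    exact pow_injOn_Iio_orderOf (by simpa [hn] using Finset.mem_range.1 hx)
      (by simpa [hn] using Finset.mem_range.1 hy) (mul_left_cancel hxy)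
  set S₁ := Finset.image (fun s => β ^ t₀ * g ^ s) (Finset.range n) with hS₁
  set S₂ := Finset.image (fun t => β ^ t) (Finset.range n) with hS₂
  have hsub : S₁ ⊆ S₂ := by
    intro x hx
    obtain ⟨s, hs, rfl⟩ := Finset.mem_image.1 hx
    have : β ^ t₀ * g ^ s = β ^ ((t₀ : ℤ) + f * s) := by
      rw [hgf, zpow_add, zpow_natCast, zpow_mul, zpow_natCast]
    obtain ⟨t, ht, htt⟩ := M ((t₀ : ℤ) + f * s)
    exact Finset.mem_image.2 ⟨t, Finset.mem_range.2 ht, by rw [← htt, ← this]⟩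
  have hS : S₁ = S₂ := by
    refine Finset.eq_of_subset_of_card_le hsub ?_
    have hc1 : S₁.card = n := by
      rw [hS₁, Finset.card_image_of_injOn
        (fun x hx y hy => hinj₁ x (by simpa using hx) y (by simpa using hy)),
        Finset.card_range]
    have hc2 : S₂.card ≤ n := by
      rw [hS₂]
      exact Finset.card_image_le.trans (Finset.card_range n).le
    omega
  -- the sums
  have hterm : ∀ s : ℕ, ((α ^ (j + N * t₀) : Fˣ) : F) * (g : F) ^ s
      = ((α ^ j * (β ^ t₀ * g ^ s) : Fˣ) : F) := by
    intro s
    rw [pow_add, pow_mul, ← hβ]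
    push_cast
    ring
  calc ∑ s ∈ Finset.range n, psi 2 F (((α ^ (j + N * t₀) : Fˣ) : F) * (g : F) ^ s)
      = ∑ s ∈ Finset.range n, psi 2 F ((α ^ j * (β ^ t₀ * g ^ s) : Fˣ) : F) := by
        exact Finset.sum_congr rfl fun s _ => by rw [hterm]
    _ = ∑ x ∈ S₁, psi 2 F ((α ^ j * x : Fˣ) : F) := by
        rw [hS₁, Finset.sum_image hinj₁]
    _ = ∑ x ∈ S₂, psi 2 F ((α ^ j * x : Fˣ) : F) := by rw [hS]
    _ = ∑ t ∈ Finset.range n, psi 2 F ((α ^ j * β ^ t : Fˣ) : F) := by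
        rw [hS₂, Finset.sum_image hinj₂]
    _ = gaussPeriod 2 F α N j := by
        rw [gaussPeriod, hcard]
        exact Finset.sum_congr rfl fun t _ => by rw [pow_add, pow_mul, ← hβ]

/-- for `q = 2`, if `a ∈ C_j^{(N₁,r)}` and `b ∈ C_k^{(N₂,r)}`, the weight of
`c(a,b,c)` is `n₁n₂/2 ∓ (1/2) η_j^{(N₁,r)} η_k^{(N₂,r)}` according to `Tr_{r/2}(c) = 0` or `1`. -/
theorem stmt15 (m : ℕ) (hm : 0 < m) (F : Type*) [Field F] [Fintype F]
    [Algebra (ZMod 2) F] (hr : Fintype.card F = 2 ^ m)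
    (α : Fˣ) (hα : ∀ x : Fˣ, x ∈ Subgroup.zpowers α)
    (g₁ g₂ : Fˣ) (n₁ n₂ : ℕ) (h₁ : orderOf g₁ = n₁) (h₂ : orderOf g₂ = n₂)
    (hcop : Nat.Coprime n₁ n₂)
    (N₁ N₂ : ℕ)
    (hN₁ : N₁ = (Fintype.card F - 1) / n₁)
    (hN₂ : N₂ = (Fintype.card F - 1) / n₂)
    (a b c : F) (j k : ℕ) (hj : j < N₁) (hk : k < N₂)
    (ha : a ∈ cClass F α N₁ j) (hb : b ∈ cClass F α N₂ k) :
    (Algebra.trace (ZMod 2) F c = 0 →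
      (hammingNorm (fun t : Fin (n₁ * n₂) =>
          Algebra.trace (ZMod 2) F
            (a * (g₁ : F) ^ (t : ℕ) + b * (g₂ : F) ^ (t : ℕ) + c)) : ℂ)
        = (n₁ : ℂ) * (n₂ : ℂ) / 2
            - (1 / 2) * gaussPeriod 2 F α N₁ j * gaussPeriod 2 F α N₂ k) ∧
    (Algebra.trace (ZMod 2) F c = 1 →
      (hammingNorm (fun t : Fin (n₁ * n₂) =>
          Algebra.trace (ZMod 2) F
            (a * (g₁ : F) ^ (t : ℕ) + b * (g₂ : F) ^ (t : ℕ) + c)) : ℂ)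
        = (n₁ : ℂ) * (n₂ : ℂ) / 2
            + (1 / 2) * gaussPeriod 2 F α N₁ j * gaussPeriod 2 F α N₂ k) := by
  classical
  have n₁pos : 0 < n₁ := h₁ ▸ orderOf_pos g₁
  have n₂pos : 0 < n₂ := h₂ ▸ orderOf_pos g₂
  have hd₁ : n₁ ∣ Fintype.card F - 1 := by
    rw [← Fintype.card_units, ← h₁]; exact orderOf_dvd_card
  have hd₂ : n₂ ∣ Fintype.card F - 1 := by
    rw [← Fintype.card_units, ← h₂]; exact orderOf_dvd_card
  have hNn₁ : N₁ * n₁ = Fintype.card F - 1 := by rw [hN₁]; exact Nat.div_mul_cancel hd₁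
  have hNn₂ : N₂ * n₂ = Fintype.card F - 1 := by rw [hN₂]; exact Nat.div_mul_cancel hd₂
  have hN₁pos : 0 < N₁ := lt_of_le_of_lt (Nat.zero_le j) hj
  have hN₂pos : 0 < N₂ := lt_of_le_of_lt (Nat.zero_le k) hk
  have η₁ := psi_inner_sum_eq_gaussPeriod F α hα g₁ n₁ N₁ j h₁ hN₁pos hNn₁ a ha
  have η₂ := psi_inner_sum_eq_gaussPeriod F α hα g₂ n₂ N₂ k h₂ hN₂pos hNn₂ b hb
  have hcrt := crt_sum n₁ n₂ n₁pos n₂pos hcop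
    (fun s => psi 2 F (a * (g₁ : F) ^ s)) (fun s => psi 2 F (b * (g₂ : F) ^ s))
  have hg₁ : ∀ t : ℕ, (g₁ : F) ^ t = (g₁ : F) ^ (t % n₁) := by
    intro t
    have := pow_mod_orderOf g₁ t
    rw [h₁] at this
    rw [← Units.val_pow_eq_pow_val, ← this, Units.val_pow_eq_pow_val]
  have hg₂ : ∀ t : ℕ, (g₂ : F) ^ t = (g₂ : F) ^ (t % n₂) := by
    intro t
    have := pow_mod_orderOf g₂ t
    rw [h₂] at this
    rw [← Units.val_pow_eq_pow_val, ← this, Units.val_pow_eq_pow_val]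
  have hval : ∀ t : ℕ, psi 2 F (a * (g₁ : F) ^ t + b * (g₂ : F) ^ t + c)
      = psi 2 F (a * (g₁ : F) ^ (t % n₁)) * psi 2 F (b * (g₂ : F) ^ (t % n₂)) * psi 2 F c := by
    intro t
    rw [psi_add, psi_add, hg₁ t, hg₂ t]
  have key : (hammingNorm (fun t : Fin (n₁ * n₂) =>
        Algebra.trace (ZMod 2) F
          (a * (g₁ : F) ^ (t : ℕ) + b * (g₂ : F) ^ (t : ℕ) + c)) : ℂ)
      = ((n₁ * n₂ : ℕ) : ℂ) / 2
          - 1 / 2 * psi 2 F c * (gaussPeriod 2 F α N₁ j * gaussPeriod 2 F α N₂ k) := by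
    rw [ham_cast]
    have step : ∀ t : Fin (n₁ * n₂),
        (1 - (-1 : ℂ) ^ ((Algebra.trace (ZMod 2) F
            (a * (g₁ : F) ^ (t : ℕ) + b * (g₂ : F) ^ (t : ℕ) + c)).val)) / 2
        = 1 / 2 - 1 / 2 * psi 2 F c
            * (psi 2 F (a * (g₁ : F) ^ ((t : ℕ) % n₁))
                * psi 2 F (b * (g₂ : F) ^ ((t : ℕ) % n₂))) := by
      intro t
      rw [← psi_eq, hval]
      ring
    rw [Finset.sum_congr rfl (fun t _ => step t), Finset.sum_sub_distrib,
      Finset.sum_const, Finset.card_univ, Fintype.card_fin, ← Finset.mul_sum]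
    have hfin : ∑ t : Fin (n₁ * n₂),
        psi 2 F (a * (g₁ : F) ^ ((t : ℕ) % n₁)) * psi 2 F (b * (g₂ : F) ^ ((t : ℕ) % n₂))
        = ∑ t ∈ Finset.range (n₁ * n₂),
            psi 2 F (a * (g₁ : F) ^ (t % n₁)) * psi 2 F (b * (g₂ : F) ^ (t % n₂)) :=
      Fin.sum_univ_eq_sum_range
        (fun t => psi 2 F (a * (g₁ : F) ^ (t % n₁)) * psi 2 F (b * (g₂ : F) ^ (t % n₂)))
        (n₁ * n₂)
    rw [hfin, hcrt, η₁, η₂, nsmul_eq_mul]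
    ring
  constructor
  · intro hc
    have hpsic : psi 2 F c = 1 := by rw [psi_eq, hc, ZMod.val_zero, pow_zero]
    rw [key, hpsic]
    push_cast
    ring
  · intro hc
    have hpsic : psi 2 F c = -1 := by rw [psi_eq, hc, ZMod.val_one, pow_one]
    rw [key, hpsic]
    push_cast
    ring
end

section
/- Let q = 2, r = 2^m, and let g_1, g_2 ∈ F_r^* have orders n_1, n_2 with gcd(n_1, n_2) = 1, N_1 = (r−1)/n_1, N_2 = (r−1)/n_2. Suppose a ∈ C_j^{(N_1, r)} for some 0 ≤ j ≤ N_1 − 1, b = 0, and c ∈ F_r. Then the Hamming weight of c(a, b, c) equals n_1 n_2/2 − (n_2/2) η_j^{(N_1, r)} if Tr_{r/2}(c) = 0, and equals n_1 n_2/2 + (n_2/2) η_j^{(N_1, r)} if Tr_{r/2}(c) = 1 (equalities after casting the weight into ℂ). -/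
lemma zmod2_cases (u : ZMod 2) : u = 0 ∨ u = 1 := by revert u; decide

lemma sum_zmod_val {n : ℕ} [NeZero n] (f : ℕ → ℂ) :
    ∑ y : ZMod n, f y.val = ∑ t ∈ Finset.range n, f t := by
  refine Finset.sum_nbij' (i := fun y : ZMod n => y.val) (j := fun t : ℕ => (t : ZMod n))
    ?_ ?_ ?_ ?_ ?_
  · intro y _; exact Finset.mem_range.mpr (ZMod.val_lt y)
  · intro t _; exact Finset.mem_univ _
  · intro y _; exact ZMod.natCast_rightInverse y
  · intro t ht; exact ZMod.val_cast_of_lt (Finset.mem_range.mp ht)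
  · intro y _; rfl

lemma periodic_nat_mul {f : ℕ → ℂ} {n : ℕ} (hf : ∀ t, f (t + n) = f t) :
    ∀ k t, f (t + n * k) = f t := by
  intro k
  induction k with
  | zero => simp
  | succ k ih => intro t; rw [Nat.mul_succ, ← Nat.add_assoc, hf, ih]

lemma sum_shift_mul {n : ℕ} (hn : 0 < n) (f : ℕ → ℂ) (hf : ∀ t, f (t + n) = f t)
    (t₀ u : ℕ) (hu : Nat.Coprime u n) :
    ∑ s ∈ Finset.range n, f (t₀ + u * s) = ∑ t ∈ Finset.range n, f t := by
  haveI : NeZero n := ⟨hn.ne'⟩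
  have fmod : ∀ t, f (t % n) = f t := by
    intro t
    conv_rhs => rw [← Nat.mod_add_div t n]
    rw [periodic_nat_mul hf]
  set g : ZMod n → ℂ := fun y => f y.val with hg
  have key : ∀ y : ZMod n, f (t₀ + u * y.val) = g ((t₀ : ZMod n) + (u : ZMod n) * y) := by
    intro y
    have : ((t₀ : ZMod n) + (u : ZMod n) * y) = (((t₀ + u * y.val : ℕ) : ZMod n)) := by
      push_cast [ZMod.natCast_rightInverse y]
      ring
    rw [this, hg]
    simp only [ZMod.val_natCast]
    exact (fmod _).symm
  calc ∑ s ∈ Finset.range n, f (t₀ + u * s)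
      = ∑ y : ZMod n, f (t₀ + u * y.val) := (sum_zmod_val _).symm
    _ = ∑ y : ZMod n, g ((t₀ : ZMod n) + (u : ZMod n) * y) :=
        Finset.sum_congr rfl fun y _ => key y
    _ = ∑ y : ZMod n, g y := by
        apply Function.Bijective.sum_comp
        have h1 : Function.Bijective (fun y : ZMod n => (t₀ : ZMod n) + y) :=
          (Equiv.addLeft (t₀ : ZMod n)).bijective
        have hU : IsUnit (u : ZMod n) :=
          ⟨ZMod.unitOfCoprime u hu, ZMod.coe_unitOfCoprime u hu⟩
        exact h1.comp (Finite.injective_iff_bijective.mp hU.mul_right_injective)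
    _ = ∑ t ∈ Finset.range n, f t := sum_zmod_val f

lemma sum_range_mul_periodic {n : ℕ} (f : ℕ → ℂ) (hf : ∀ t, f (t + n) = f t) (k : ℕ) :
    ∑ t ∈ Finset.range (n * k), f t = (k : ℂ) * ∑ s ∈ Finset.range n, f s := by
  induction k with
  | zero => simp
  | succ k ih =>
    rw [Nat.mul_succ, Finset.sum_range_add, ih]
    have h2 : ∑ x ∈ Finset.range n, f (n * k + x) = ∑ x ∈ Finset.range n, f x :=
      Finset.sum_congr rfl fun x _ => by rw [Nat.add_comm, periodic_nat_mul hf]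
    rw [h2]
    push_cast
    ring

lemma psi_eq_chi (F : Type*) [Field F] [Fintype F] [Algebra (ZMod 2) F] (x : F) :
    psi 2 F x = if Algebra.trace (ZMod 2) F x = 0 then 1 else -1 := by
  unfold psi
  rcases zmod2_cases (Algebra.trace (ZMod 2) F x) with h | h <;> rw [h]
  · norm_num
  · rw [if_neg (by decide)]
    have hv : ((1 : ZMod 2).val : ℂ) = 1 := by norm_num [ZMod.val_one]
    rw [hv]
    rw [show (2 * (Real.pi : ℂ) * Complex.I * 1 / (2 : ℕ) : ℂ)
        = (Real.pi : ℂ) * Complex.I by push_cast; ring]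
    exact Complex.exp_pi_mul_I

/-- for `q = 2`, if `a ∈ C_j^{(N₁,r)}` and `b = 0`, the weight of `c(a,b,c)` is
`n₁n₂/2 ∓ (n₂/2) η_j^{(N₁,r)}` according to `Tr_{r/2}(c) = 0` or `1`. -/
theorem stmt16 (m : ℕ) (hm : 0 < m) (F : Type*) [Field F] [Fintype F]
    [Algebra (ZMod 2) F] (hr : Fintype.card F = 2 ^ m)
    (α : Fˣ) (hα : ∀ x : Fˣ, x ∈ Subgroup.zpowers α)
    (g₁ g₂ : Fˣ) (n₁ n₂ : ℕ) (h₁ : orderOf g₁ = n₁) (h₂ : orderOf g₂ = n₂)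
    (hcop : Nat.Coprime n₁ n₂)
    (N₁ N₂ : ℕ)
    (hN₁ : N₁ = (Fintype.card F - 1) / n₁)
    (hN₂ : N₂ = (Fintype.card F - 1) / n₂)
    (a b c : F) (j : ℕ) (hj : j < N₁)
    (ha : a ∈ cClass F α N₁ j) (hb : b = 0) :
    (Algebra.trace (ZMod 2) F c = 0 →
      (hammingNorm (fun t : Fin (n₁ * n₂) =>
          Algebra.trace (ZMod 2) F
            (a * (g₁ : F) ^ (t : ℕ) + b * (g₂ : F) ^ (t : ℕ) + c)) : ℂ)
        = (n₁ : ℂ) * (n₂ : ℂ) / 2 - ((n₂ : ℂ) / 2) * gaussPeriod 2 F α N₁ j) ∧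
    (Algebra.trace (ZMod 2) F c = 1 →
      (hammingNorm (fun t : Fin (n₁ * n₂) =>
          Algebra.trace (ZMod 2) F
            (a * (g₁ : F) ^ (t : ℕ) + b * (g₂ : F) ^ (t : ℕ) + c)) : ℂ)
        = (n₁ : ℂ) * (n₂ : ℂ) / 2 + ((n₂ : ℂ) / 2) * gaussPeriod 2 F α N₁ j) := by
  classical
  subst hb
  simp only [zero_mul, add_zero]
  set T := Algebra.trace (ZMod 2) F with hT
  set χ : F → ℂ := fun x => if T x = 0 then 1 else -1 with hχ
  set M := Fintype.card F - 1 with hMdef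
  -- basic facts
  have hMcard : Nat.card Fˣ = M := by
    rw [Nat.card_eq_fintype_card, Fintype.card_units]
  have hoα : orderOf α = M := (orderOf_eq_card_of_forall_mem_zpowers hα).trans hMcard
  have hMpos : 0 < M := by
    have : 2 ≤ Fintype.card F := by
      rw [hr]; exact Nat.one_lt_two_pow_iff.mpr hm.ne'
    omega
  have hn₁pos : 0 < n₁ := h₁ ▸ orderOf_pos g₁
  have hn₂pos : 0 < n₂ := h₂ ▸ orderOf_pos g₂
  have hdvd : n₁ ∣ M := by
    rw [← h₁, ← hMcard]
    exact orderOf_dvd_natCard g₁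
  have hN₁n₁ : N₁ * n₁ = M := by rw [hN₁]; exact Nat.div_mul_cancel hdvd
  have hN₁pos : 0 < N₁ := by
    rcases Nat.eq_zero_or_pos N₁ with h | h
    · rw [h, zero_mul] at hN₁n₁; omega
    · exact h
  have hdivN : M / N₁ = n₁ := by
    rw [← hN₁n₁, Nat.mul_div_cancel_left _ hN₁pos]
  -- write g₁ as a power of α
  obtain ⟨k, hk'⟩ := mem_powers_iff_mem_zpowers.mpr (hα g₁)
  have hk : α ^ k = g₁ := hk'
  have hgcd : M.gcd k = N₁ := by
    have horder := orderOf_pow (n := k) α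
    rw [hk, h₁, hoα] at horder
    have hgdvd : M.gcd k ∣ M := Nat.gcd_dvd_left _ _
    have hgpos : 0 < M.gcd k := by
      rcases Nat.eq_zero_or_pos (M.gcd k) with h | h
      · rw [h, Nat.div_zero] at horder; omega
      · exact h
    have h1 : M.gcd k * n₁ = M := by
      rw [horder]; exact Nat.mul_div_cancel' hgdvd
    exact Nat.eq_of_mul_eq_mul_right hn₁pos (h1.trans hN₁n₁.symm)
  have hN₁k : N₁ ∣ k := hgcd ▸ Nat.gcd_dvd_right M k
  obtain ⟨u, hu⟩ := hN₁k
  have hucop : Nat.Coprime u n₁ := by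
    have : N₁ * Nat.gcd n₁ u = N₁ := by
      rw [← Nat.gcd_mul_left, hN₁n₁, ← hu, hgcd]
    have h1 : Nat.gcd n₁ u = 1 := by
      have := Nat.eq_of_mul_eq_mul_left hN₁pos (this.trans (Nat.mul_one N₁).symm)
      exact this
    exact Nat.coprime_comm.mp h1
  obtain ⟨t₀, ht₀⟩ := ha
  -- the periodic function
  set f : ℕ → ℂ := fun t => χ ((α ^ (j + N₁ * t) : Fˣ) : F) with hf
  have hαM : α ^ M = 1 := by rw [← hoα]; exact pow_orderOf_eq_one α
  have hfper : ∀ t, f (t + n₁) = f t := by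
    intro t
    have : α ^ (j + N₁ * (t + n₁)) = α ^ (j + N₁ * t) := by
      rw [show j + N₁ * (t + n₁) = (j + N₁ * t) + N₁ * n₁ by ring, pow_add, hN₁n₁, hαM,
        mul_one]
    simp only [hf, this]
  -- χ is multiplicative on sums of traces
  have hχadd : ∀ x y : F, χ (x + y) = χ x * χ y := by
    intro x y
    simp only [hχ, hT, map_add]
    rcases zmod2_cases (Algebra.trace (ZMod 2) F x) with hx | hx <;>
      rcases zmod2_cases (Algebra.trace (ZMod 2) F y) with hy | hy <;>
        rw [hx, hy] <;> norm_num <;> decide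
  -- χ(a g₁^s) = f (t₀ + u s)
  have hchi_ag : ∀ s : ℕ, χ (a * (g₁ : F) ^ s) = f (t₀ + u * s) := by
    intro s
    have hg : (g₁ : F) ^ s = ((α ^ (N₁ * u * s) : Fˣ) : F) := by
      rw [← hk, hu]
      push_cast [← pow_mul]
      rfl
    rw [ht₀, hg, hf]
    have : ((α ^ (j + N₁ * t₀) : Fˣ) : F) * ((α ^ (N₁ * u * s) : Fˣ) : F)
        = ((α ^ (j + N₁ * (t₀ + u * s)) : Fˣ) : F) := by
      rw [← Units.val_mul, ← pow_add]
      ring_nf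
    rw [this]
  -- the inner sum is the Gauss period
  have hη : gaussPeriod 2 F α N₁ j = ∑ t ∈ Finset.range n₁, f t := by
    unfold gaussPeriod
    rw [← hMdef, hdivN]
    exact Finset.sum_congr rfl fun t _ => psi_eq_chi F _
  have hinner : ∑ s ∈ Finset.range n₁, χ (a * (g₁ : F) ^ s) = gaussPeriod 2 F α N₁ j := by
    rw [hη, ← sum_shift_mul hn₁pos f hfper t₀ u hucop]
    exact Finset.sum_congr rfl fun s _ => hchi_ag s
  -- full character sum
  have hgper : ∀ t, χ (a * (g₁ : F) ^ (t + n₁) + c) = χ (a * (g₁ : F) ^ t + c) := by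
    intro t
    have hg1 : (g₁ : F) ^ n₁ = 1 := by
      have : g₁ ^ n₁ = 1 := by rw [← h₁]; exact pow_orderOf_eq_one g₁
      calc (g₁ : F) ^ n₁ = ((g₁ ^ n₁ : Fˣ) : F) := by push_cast; rfl
        _ = 1 := by rw [this]; rfl
    rw [pow_add, hg1, mul_one]
  have hS : ∑ t ∈ Finset.range (n₁ * n₂), χ (a * (g₁ : F) ^ t + c)
      = χ c * ((n₂ : ℂ) * gaussPeriod 2 F α N₁ j) := by
    rw [sum_range_mul_periodic _ hgper n₂]
    have : ∑ s ∈ Finset.range n₁, χ (a * (g₁ : F) ^ s + c)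
        = χ c * ∑ s ∈ Finset.range n₁, χ (a * (g₁ : F) ^ s) := by
      rw [Finset.mul_sum]
      exact Finset.sum_congr rfl fun s _ => by rw [hχadd, mul_comm]
    rw [this, hinner]
    ring
  -- weight in terms of character sum
  set W := hammingNorm (fun t : Fin (n₁ * n₂) => T (a * (g₁ : F) ^ (t : ℕ) + c)) with hW
  have hWsum : ∑ t ∈ Finset.range (n₁ * n₂), χ (a * (g₁ : F) ^ t + c)
      = ((n₁ * n₂ : ℕ) : ℂ) - 2 * (W : ℂ) := by
    have hterm : ∀ x : F, χ x = 1 - 2 * (if T x ≠ 0 then (1 : ℂ) else 0) := by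
      intro x
      simp only [hχ]
      rcases zmod2_cases (T x) with hx | hx <;> rw [hx] <;> norm_num
    rw [← Fin.sum_univ_eq_sum_range (fun t => χ (a * (g₁ : F) ^ t + c)) (n₁ * n₂)]
    have : ∑ t : Fin (n₁ * n₂), χ (a * (g₁ : F) ^ (t : ℕ) + c)
        = ∑ t : Fin (n₁ * n₂),
            (1 - 2 * (if T (a * (g₁ : F) ^ (t : ℕ) + c) ≠ 0 then (1 : ℂ) else 0)) :=
      Finset.sum_congr rfl fun t _ => hterm _
    rw [this, Finset.sum_sub_distrib, Finset.sum_const, ← Finset.mul_sum, Finset.sum_boole]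
    have hcard : (Finset.univ.filter
        fun t : Fin (n₁ * n₂) => T (a * (g₁ : F) ^ (t : ℕ) + c) ≠ 0).card = W := rfl
    rw [hcard]
    simp [Finset.card_univ]
  have hkey : ((n₁ * n₂ : ℕ) : ℂ) - 2 * (W : ℂ)
      = χ c * ((n₂ : ℂ) * gaussPeriod 2 F α N₁ j) := by rw [← hWsum, hS]
  constructor
  · intro h0
    have hc1 : χ c = 1 := by simp only [hχ, hT] at *; rw [if_pos h0]
    rw [hc1, one_mul] at hkey
    push_cast at hkey
    linear_combination (-1/2 : ℂ) * hkey
  · intro h1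
    have hc1 : χ c = -1 := by
      simp only [hχ, hT] at *
      rw [h1, if_neg (by decide)]
    rw [hc1] at hkey
    push_cast at hkey
    linear_combination (-1/2 : ℂ) * hkey
end
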